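/- Let psi : DihedralGroup 3 → Multiplicative (ZMod 2) be the group homomorphism sending every rotation rᵢ to 0 and every reflection srᵢ to 1 (written additively in ZMod 2), and let ψ̃ : ℤ[DihedralGroup 3] → ℤ[ZMod 2] be the induced ring homomorphism of integral group rings. Then the image under ψ̃ of the center of ℤ[DihedralGroup 3] is not all of ℤ[ZMod 2]; i.e., there exists y ∈ ℤ[ZMod 2] such that no central element x of ℤ[DihedralGroup 3] satisfies ψ̃(x) = y. (Hence the classical center construction, applied to ring homomorphisms by restriction, is not functorial.) -/

import Mathlib

/-!
A central element of a group ring is constant on conjugacy classes. In `DihedralGroup 3` the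
three reflections are conjugate, so a central `x` has the same coefficient `c` at each of them,
and the coefficient of `ψ̃ x` at the generator of `ZMod 2` is `3 * c`. It is never `1`.
-/

namespace MonoidAlgebra

section Center

variable {k G : Type*} [Semiring k] [Group G]

theorem coeff_conj_of_mem_center {x : MonoidAlgebra k G} (hx : x ∈ Set.center (MonoidAlgebra k G))
    (g h : G) : x.coeff (g * h * g⁻¹) = x.coeff h := by
  have hcomm := congr_arg (fun y : MonoidAlgebra k G => y.coeff (g * h))
    (Semigroup.mem_center_iff.mp hx (single g 1))
  simpa using hcomm.symm

theorem coeff_eq_of_isConj {x : MonoidAlgebra k G} (hx : x ∈ Set.center (MonoidAlgebra k G))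
    {g h : G} (hgh : IsConj g h) : x.coeff g = x.coeff h := by
  obtain ⟨c, rfl⟩ := isConj_iff.mp hgh
  exact (coeff_conj_of_mem_center hx c g).symm

end Center

theorem coeff_mapDomainRingHom_eq_sum {k G H : Type*} [Semiring k] [Monoid G] [Monoid H]
    [Fintype G] [DecidableEq H] (f : G →* H) (x : MonoidAlgebra k G) (b : H) :
    (mapDomainRingHom k f x).coeff b = ∑ g with f g = b, x.coeff g := by
  simp [mapDomain, Finsupp.mapDomain, Finsupp.sum_fintype, Finsupp.single_apply, Finset.sum_filter]

end MonoidAlgebra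

namespace DihedralGroup

variable {n : ℕ}

theorem r_mul_sr_mul_inv_r (i j : ZMod n) : r i * sr j * (r i)⁻¹ = sr (j - 2 * i) := by
  simp only [r_mul_sr, inv_r, sr_mul_r]
  ring_nf

theorem isConj_sr_sr (hn : Odd n) (i j : ZMod n) : IsConj (sr i) (sr j) := by
  obtain ⟨m, rfl⟩ := hn
  have two_mul_inv : (2 : ZMod (2 * m + 1)) * (m + 1) = 1 := by
    have h : ((2 * m + 1 : ℕ) : ZMod (2 * m + 1)) = 0 := ZMod.natCast_self _
    push_cast at h
    linear_combination h
  refine isConj_iff.mpr ⟨r ((m + 1) * (i - j)), ?_⟩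
  rw [r_mul_sr_mul_inv_r]
  congr 1
  linear_combination -(i - j) * two_mul_inv

theorem sum_univ [NeZero n] {M : Type*} [AddCommMonoid M] (f : DihedralGroup n → M) :
    ∑ g, f g = ∑ i, f (r i) + ∑ i, f (sr i) := by
  rw [← equivSum.symm.sum_comp, Fintype.sum_sum_type]
  rfl

end DihedralGroup

open DihedralGroup in
theorem center_image_not_surjective_general
    (ψ : DihedralGroup 3 →* Multiplicative (ZMod 2))
    (hψs : ∀ i : ZMod 3, ψ (DihedralGroup.sr i) = Multiplicative.ofAdd (1 : ZMod 2)) :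
    ∃ y : MonoidAlgebra ℤ (Multiplicative (ZMod 2)),
      ∀ x ∈ Subring.center (MonoidAlgebra ℤ (DihedralGroup 3)),
        MonoidAlgebra.mapDomainRingHom ℤ ψ x ≠ y := by
  refine ⟨MonoidAlgebra.single (Multiplicative.ofAdd 1) 1, fun x hx h => ?_⟩
  have hψr (i : ZMod 3) : ψ (r i) ≠ Multiplicative.ofAdd 1 := by
    have hri : r i = sr 0 * sr i := by rw [sr_mul_sr, sub_zero]
    rw [hri, map_mul, hψs, hψs]
    decide
  have hsr (i : ZMod 3) : x.coeff (sr i) = x.coeff (sr 0) :=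
    MonoidAlgebra.coeff_eq_of_isConj hx (isConj_sr_sr (by decide) i 0)
  have hcoeff : (MonoidAlgebra.mapDomainRingHom ℤ ψ x).coeff (Multiplicative.ofAdd 1) =
      3 * x.coeff (sr 0) := by
    rw [MonoidAlgebra.coeff_mapDomainRingHom_eq_sum, Finset.sum_filter, sum_univ]
    simp [hψs, hψr, hsr]
  rw [h, MonoidAlgebra.coeff_single, Finsupp.single_eq_same] at hcoeff
  omega

/-- Let `ψ : DihedralGroup 3 →* Multiplicative (ZMod 2)` send every
rotation to `0` and every reflection to `1`, and let
`ψ̃ : ℤ[DihedralGroup 3] →+* ℤ[ZMod 2]` be the induced ring homomorphism of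
integral group rings.  Then the image under `ψ̃` of the center of
`ℤ[DihedralGroup 3]` is not all of `ℤ[ZMod 2]`: some `y` is not `ψ̃ x` for any
central `x`.  (Hence the classical center construction is not functorial.) -/
theorem center_image_not_surjective
    (ψ : DihedralGroup 3 →* Multiplicative (ZMod 2))
    (hψr : ∀ i : ZMod 3, ψ (DihedralGroup.r i) = Multiplicative.ofAdd (0 : ZMod 2))
    (hψs : ∀ i : ZMod 3, ψ (DihedralGroup.sr i) = Multiplicative.ofAdd (1 : ZMod 2)) :
    ∃ y : MonoidAlgebra ℤ (Multiplicative (ZMod 2)),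
      ∀ x ∈ Subring.center (MonoidAlgebra ℤ (DihedralGroup 3)),
        MonoidAlgebra.mapDomainRingHom ℤ ψ x ≠ y :=
  center_image_not_surjective_general ψ hψs
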